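/- Let X be a nonzero positive semidefinite 2 × 2 complex matrix and set ξ = Ent(X²)/τ(X²). Then α(ξ)·Ent(X²) = ⟨X, L X⟩, i.e., the improved logarithmic-Sobolev inequality holds with equality for n = 1. -/

import Mathlib

noncomputable section

open scoped Matrix ComplexOrder

/-- The algebra of operators on `(ℂ²)^{⊗ n}`, as `2^n × 2^n` matrices indexed by `Fin n → Fin 2`. -/
abbrev Mq (n : ℕ) := Matrix (Fin n → Fin 2) (Fin n → Fin 2) ℂ

/-- Normalized trace `τ(X) = 2^{-n} tr X`. -/
def qTau {n : ℕ} (X : Mq n) : ℂ := ((2 : ℂ) ^ n)⁻¹ * X.trace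

/-- Real part of the normalized trace. -/
def qTauR {n : ℕ} (X : Mq n) : ℝ := (qTau X).re

/-- Normalized Hilbert–Schmidt inner product `⟨X, Y⟩ = τ(X† Y)`. -/
def qInner {n : ℕ} (X Y : Mq n) : ℂ := qTau (Xᴴ * Y)

/-- `|X| = √(X† X)`. -/
def mAbs {n : ℕ} (X : Mq n) : Mq n := (Matrix.posSemidef_conjTranspose_mul_self X).1.eigenvectorUnitary.1 *
    Matrix.diagonal ((fun x : ℝ => (x : ℂ)) ∘ Real.sqrt ∘ (Matrix.posSemidef_conjTranspose_mul_self X).1.eigenvalues) *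
    (star (Matrix.posSemidef_conjTranspose_mul_self X).1.eigenvectorUnitary : Matrix _ _ ℂ)

/-- The entropy `Ent(X) = τ(X ln X) − τ(X) ln τ(X)` (with the convention `0 ln 0 = 0`),
for positive semidefinite `X`, via the continuous functional calculus. -/
def mEnt {n : ℕ} (X : Mq n) : ℝ :=
  qTauR (cfc (fun x : ℝ => x * Real.log x) X) - qTauR X * Real.log (qTauR X)

/-- Real powers `X^p` of a positive semidefinite matrix, by functional calculus on the
support (`0 ^ p = 0` for `p ≠ 0`). -/
def mPow {n : ℕ} (X : Mq n) (p : ℝ) : Mq n := cfc (fun x : ℝ => x ^ p) X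

/-- Normalized Schatten `p`-norm `‖X‖_p = (τ(|X|^p))^{1/p}`. -/
def schatten {n : ℕ} (p : ℝ) (X : Mq n) : ℝ := qTauR (mPow (mAbs X) p) ^ (1 / p)

/-- Conditional expectation onto the `i`-th qubit being maximally mixed:
`E_i = I^{⊗(i-1)} ⊗ (τ(·) I) ⊗ I^{⊗(n-i)}`. -/
def condExpQ {n : ℕ} (i : Fin n) (X : Mq n) : Mq n :=
  Matrix.of fun a b =>
    if a i = b i then
      (2 : ℂ)⁻¹ * ∑ c : Fin 2, X (Function.update a i c) (Function.update b i c)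
    else 0

/-- The Lindblad generator `K_n = Σ_i L̂_i`, where `L̂_i` acts as `L(X) = X − τ(X) I`
on the `i`-th tensor factor. -/
def Kq (n : ℕ) (X : Mq n) : Mq n := ∑ i : Fin n, (X - condExpQ i X)

/-- The depolarizing channel on the `i`-th qubit:
`e^{-t} X + (1 - e^{-t}) τ_i(X) ⊗ I_i`. -/
def depolStep {n : ℕ} (t : ℝ) (i : Fin n) (X : Mq n) : Mq n :=
  (Real.exp (-t) : ℂ) • X + ((1 : ℂ) - (Real.exp (-t) : ℂ)) • condExpQ i X

/-- `Ψ_t^{⊗ n}`: the `n`-fold tensor power of the qubit depolarizing channel, i.e. the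
composition over all qubits `i` of the depolarizing channel acting on the `i`-th factor. -/
def psiDep {n : ℕ} (t : ℝ) (X : Mq n) : Mq n :=
  (List.finRange n).foldr (fun i Y => depolStep t i Y) X

/-- The binary entropy function `h(s) = −s ln s − (1−s) ln(1−s)`. -/
def binEnt (s : ℝ) : ℝ := -(s * Real.log s) - (1 - s) * Real.log (1 - s)

/-- `h⁻¹ : [0, ln 2] → [0, 1/2]`, the inverse of the restriction of the binary entropy
function to `[0, 1/2]`. -/
def binEntInv (y : ℝ) : ℝ := Function.invFunOn binEnt (Set.Icc 0 (1 / 2)) y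

/-- `φ(ξ) = 1/2 − √(h⁻¹(ln 2 − ξ)(1 − h⁻¹(ln 2 − ξ)))`. -/
def phiF (ξ : ℝ) : ℝ :=
  1 / 2 - Real.sqrt (binEntInv (Real.log 2 - ξ) * (1 - binEntInv (Real.log 2 - ξ)))

/-- `α(ξ) = φ(ξ)/ξ` for `ξ ∈ (0, ln 2]`, with `α(0) = 1/2` by continuous extension. -/
def alphaF (ξ : ℝ) : ℝ := if ξ = 0 then 1 / 2 else ξ⁻¹ * phiF ξ


/-! Generic versions over an arbitrary finite index type, with normalized trace. -/

/-- Normalized trace `τ(X) = d⁻¹ tr X` on `d × d` matrices. -/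
def gTau {d : Type*} [Fintype d] (X : Matrix d d ℂ) : ℂ := (Fintype.card d : ℂ)⁻¹ * X.trace

/-- Real part of the normalized trace. -/
def gTauR {d : Type*} [Fintype d] (X : Matrix d d ℂ) : ℝ := (gTau X).re

/-- Normalized Hilbert–Schmidt inner product. -/
def gInner {d : Type*} [Fintype d] (X Y : Matrix d d ℂ) : ℂ := gTau (Xᴴ * Y)

/-- `|X| = √(X† X)`. -/
def gAbs {d : Type*} [Fintype d] [DecidableEq d] (X : Matrix d d ℂ) : Matrix d d ℂ :=
  (Matrix.posSemidef_conjTranspose_mul_self X).1.eigenvectorUnitary.1 *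
    Matrix.diagonal ((fun x : ℝ => (x : ℂ)) ∘ Real.sqrt ∘ (Matrix.posSemidef_conjTranspose_mul_self X).1.eigenvalues) *
    (star (Matrix.posSemidef_conjTranspose_mul_self X).1.eigenvectorUnitary : Matrix _ _ ℂ)

/-- Entropy `Ent(X) = τ(X ln X) − τ(X) ln τ(X)` (convention `0 ln 0 = 0`). -/
def gEnt {d : Type*} [Fintype d] [DecidableEq d] (X : Matrix d d ℂ) : ℝ :=
  gTauR (cfc (fun x : ℝ => x * Real.log x) X) - gTauR X * Real.log (gTauR X)

/-- Normalized Schatten 2-norm `‖X‖₂ = √(τ(X† X))`. -/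
def gNorm2 {d : Type*} [Fintype d] (X : Matrix d d ℂ) : ℝ := Real.sqrt (gTauR (Xᴴ * X))
/-- The single-qubit Lindblad generator `L(X) = X − τ(X) I` on `2 × 2` matrices. -/
def Lgen (X : Matrix (Fin 2) (Fin 2) ℂ) : Matrix (Fin 2) (Fin 2) ℂ := X - gTau X • 1

/-!
Diagonalise `X` with eigenvalues `a, b ≥ 0`. With `p = a² / (a² + b²)` one gets
`ξ = Ent(X²) / τ(X²) = ln 2 − h(p)`, so by the symmetry `h(p) = h(1 − p)` the radicand in `α` is
`p (1 − p)` and `√(p (1 − p)) = ab / (a² + b²)`. Hence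
`α(ξ) Ent(X²) = τ(X²) (1/2 − ab / (a² + b²)) = (a − b)² / 4`, which is the variance
`τ(X²) − τ(X)² = ⟨X, L X⟩`.
-/

open Real in
lemma binEnt_eq_binEntropy : binEnt = binEntropy := by
  funext s
  simp only [binEnt, binEntropy, log_inv]
  ring

lemma binEntInv_binEnt {s : ℝ} (h0 : 0 ≤ s) (h1 : s ≤ 1 / 2) : binEntInv (binEnt s) = s := by
  have hs : s ∈ Set.Icc (0 : ℝ) (1 / 2) := ⟨h0, h1⟩
  have hinj : Set.InjOn binEnt (Set.Icc 0 (1 / 2)) := by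
    rw [binEnt_eq_binEntropy, one_div]
    exact Real.binEntropy_strictMonoOn.injOn
  exact hinj (Function.invFunOn_mem ⟨s, hs, rfl⟩) hs (Function.invFunOn_eq ⟨s, hs, rfl⟩)

lemma phiF_log_two_sub_binEnt {p : ℝ} (h0 : 0 ≤ p) (h1 : p ≤ 1) :
    phiF (Real.log 2 - binEnt p) = 1 / 2 - √(p * (1 - p)) := by
  rcases le_total p (1 / 2) with hp | hp
  · rw [phiF, sub_sub_cancel, binEntInv_binEnt h0 hp]
  · have hsymm : binEnt p = binEnt (1 - p) := by
      rw [binEnt_eq_binEntropy, Real.binEntropy_one_sub]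
    rw [phiF, sub_sub_cancel, hsymm, binEntInv_binEnt (by linarith) (by linarith), sub_sub_cancel,
      mul_comm]

lemma phiF_zero : phiF 0 = 0 := by
  have h := phiF_log_two_sub_binEnt (p := 1 / 2) (by norm_num) (by norm_num)
  rw [binEnt_eq_binEntropy, one_div, Real.binEntropy_two_inv, sub_self] at h
  rw [h, show (2⁻¹ : ℝ) * (1 - 2⁻¹) = (1 / 2) ^ 2 by norm_num, Real.sqrt_sq (by norm_num)]
  norm_num

lemma alphaF_mul_self (ξ : ℝ) : alphaF ξ * ξ = phiF ξ := by
  rcases eq_or_ne ξ 0 with rfl | hξ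
  · rw [mul_zero, phiF_zero]
  · rw [alphaF, if_neg hξ, mul_right_comm, inv_mul_cancel₀ hξ, one_mul]

lemma entropy_two_point_eq {u v : ℝ} (hu : 0 ≤ u) (hv : 0 ≤ v) (huv : 0 < u + v) :
    (u * Real.log u + v * Real.log v) / 2 - (u + v) / 2 * Real.log ((u + v) / 2)
      = (u + v) / 2 * (Real.log 2 - binEnt (u / (u + v))) := by
  have hlog {w : ℝ} (hw : 0 ≤ w) : w / (u + v) * Real.log (w / (u + v))
      = w / (u + v) * (Real.log w - Real.log (u + v)) := by
    rcases hw.eq_or_lt with rfl | hw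
    · simp
    · rw [Real.log_div hw.ne' huv.ne']
  have hcompl : 1 - u / (u + v) = v / (u + v) := by field_simp; ring
  rw [binEnt, hcompl, hlog hu, hlog hv, Real.log_div huv.ne' two_ne_zero]
  field_simp
  ring

lemma alphaF_mul_entropy_two_point {a b : ℝ} (ha : 0 ≤ a) (hb : 0 ≤ b)
    (hab : 0 < a ^ 2 + b ^ 2) :
    alphaF (((a ^ 2 * Real.log (a ^ 2) + b ^ 2 * Real.log (b ^ 2)) / 2
        - (a ^ 2 + b ^ 2) / 2 * Real.log ((a ^ 2 + b ^ 2) / 2)) / ((a ^ 2 + b ^ 2) / 2))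
      * ((a ^ 2 * Real.log (a ^ 2) + b ^ 2 * Real.log (b ^ 2)) / 2
        - (a ^ 2 + b ^ 2) / 2 * Real.log ((a ^ 2 + b ^ 2) / 2))
    = (a - b) ^ 2 / 4 := by
  have hp0 : 0 ≤ a ^ 2 / (a ^ 2 + b ^ 2) := by positivity
  have hp1 : a ^ 2 / (a ^ 2 + b ^ 2) ≤ 1 := by rw [div_le_one hab]; nlinarith
  have hsqrt : √(a ^ 2 / (a ^ 2 + b ^ 2) * (1 - a ^ 2 / (a ^ 2 + b ^ 2)))
      = a * b / (a ^ 2 + b ^ 2) := by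
    rw [← Real.sqrt_sq (by positivity : 0 ≤ a * b / (a ^ 2 + b ^ 2))]
    congr 1
    field_simp
    ring
  rw [entropy_two_point_eq (sq_nonneg a) (sq_nonneg b) hab,
    mul_div_cancel_left₀ _ (by positivity), mul_left_comm, alphaF_mul_self,
    phiF_log_two_sub_binEnt hp0 hp1, hsqrt]
  field_simp
  ring

section NormalizedTrace

variable {d : Type*} [Fintype d] [DecidableEq d]

lemma Matrix.IsHermitian.trace_cfc {𝕜 : Type*} [RCLike 𝕜] {A : Matrix d d 𝕜}
    (hA : A.IsHermitian) (f : ℝ → ℝ) :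
    (cfc f A).trace = ∑ i, (f (hA.eigenvalues i) : 𝕜) := by
  rw [hA.cfc_eq, Matrix.IsHermitian.cfc, Unitary.conjStarAlgAut_apply, Matrix.trace_mul_cycle,
    Unitary.coe_star_mul_self, Matrix.one_mul, Matrix.trace_diagonal]
  rfl

lemma gTau_cfc {A : Matrix d d ℂ} (hA : A.IsHermitian) (f : ℝ → ℝ) :
    gTau (cfc f A) = ((∑ i, f (hA.eigenvalues i)) / Fintype.card d : ℝ) := by
  rw [gTau, hA.trace_cfc, RCLike.ofReal_eq_complex_ofReal, Complex.ofReal_div,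
    Complex.ofReal_sum, Complex.ofReal_natCast, inv_mul_eq_div]

lemma gTau_eq_sum_eigenvalues {X : Matrix d d ℂ} (hX : X.IsHermitian) :
    gTau X = ((∑ i, hX.eigenvalues i) / Fintype.card d : ℝ) := by
  conv_lhs => rw [← cfc_id ℝ X hX.isSelfAdjoint]
  exact gTau_cfc hX id

lemma gTau_mul_self {X : Matrix d d ℂ} (hX : X.IsHermitian) :
    gTau (X * X) = ((∑ i, hX.eigenvalues i ^ 2) / Fintype.card d : ℝ) := by
  rw [← sq, ← cfc_pow_id (R := ℝ) X 2 hX.isSelfAdjoint]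
  exact gTau_cfc hX _

lemma gEnt_mul_self {X : Matrix d d ℂ} (hX : X.IsHermitian) :
    gEnt (X * X)
      = (∑ i, hX.eigenvalues i ^ 2 * Real.log (hX.eigenvalues i ^ 2)) / Fintype.card d
      - (∑ i, hX.eigenvalues i ^ 2) / Fintype.card d
        * Real.log ((∑ i, hX.eigenvalues i ^ 2) / Fintype.card d) := by
  rw [gEnt, gTauR, gTauR, gTau_mul_self hX, ← sq,
    ← cfc_comp_pow (fun x : ℝ => x * Real.log x) 2 X Real.continuous_mul_log.continuousOn,
    gTau_cfc hX, Complex.ofReal_re, Complex.ofReal_re]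

lemma gInner_self_sub_gTau_smul_one {X : Matrix d d ℂ} (hX : X.IsHermitian) :
    gInner X (X - gTau X • 1) = gTau (X * X) - gTau X ^ 2 := by
  rw [gInner, hX.eq, Matrix.mul_sub, Matrix.mul_smul, Matrix.mul_one, gTau, gTau, gTau,
    Matrix.trace_sub, Matrix.trace_smul, smul_eq_mul]
  ring

end NormalizedTrace

/-- For `n = 1` the improved log-Sobolev inequality holds with equality:
`α(ξ) Ent(X²) = ⟨X, L X⟩` with `ξ = Ent(X²)/τ(X²)`. -/
theorem log_sobolev_equality_one_qubit (X : Matrix (Fin 2) (Fin 2) ℂ)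
    (hX : X.PosSemidef) (hX0 : X ≠ 0) :
    alphaF (gEnt (X * X) / gTauR (X * X)) * gEnt (X * X) = (gInner X (Lgen X)).re := by
  have hH := hX.isHermitian
  have ha := hX.eigenvalues_nonneg 0
  have hb := hX.eigenvalues_nonneg 1
  have hab : 0 < hH.eigenvalues 0 ^ 2 + hH.eigenvalues 1 ^ 2 := by
    by_contra! h
    refine hX0 (hH.eigenvalues_eq_zero_iff.mp (funext fun i => ?_))
    fin_cases i <;> simp only [Fin.zero_eta, Fin.mk_one, Fin.isValue, Pi.zero_apply] <;>
      nlinarith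
  rw [Lgen, gInner_self_sub_gTau_smul_one hH, gTau_mul_self hH, gTau_eq_sum_eigenvalues hH,
    gEnt_mul_self hH, gTauR, gTau_mul_self hH, ← Complex.ofReal_pow, ← Complex.ofReal_sub,
    Complex.ofReal_re, Complex.ofReal_re]
  simp only [Fin.sum_univ_two, Fintype.card_fin, Nat.cast_ofNat]
  rw [alphaF_mul_entropy_two_point ha hb hab]
  ring

end
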